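/- arXiv:2210.10912 — 2 statements merged into one kernel-verified Lean document; each statement's English description precedes it below -/
import Mathlib

section
/- On the characteristic set Σ = {r²τ² = ξ² + (Aτ+η)²} with τ ≠ 0 and r > |A|, the coefficient of ∂_t in the rescaled b-Hamilton vector field, namely r²τ - A(Aτ+η), has the same sign as τ. Consequently t is monotone along null bicharacteristics remaining in the region r > |A|. -/
/-! Multiplying the coefficient by `τ` gives `r²τ² - Aτ(Aτ+η)`. On the characteristic set
`|Aτ+η| ≤ r|τ|`, so `|Aτ(Aτ+η)| ≤ |A| r τ² < r²τ²` as soon as `τ ≠ 0`: the product is positive,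
hence the coefficient has the sign of `τ`. -/

lemma abs_le_abs_mul_of_sq_eq_add_sq {r τ ξ w : ℝ} (h : r ^ 2 * τ ^ 2 = ξ ^ 2 + w ^ 2) :
    |w| ≤ |r| * |τ| := by
  rw [← abs_mul, ← sq_le_sq, mul_pow, h]
  exact le_add_of_nonneg_left (sq_nonneg ξ)

lemma mul_sub_mul_pos_of_abs_le {A r τ w : ℝ} (hw : |w| ≤ r * |τ|) (hr : |A| < r) (hτ : τ ≠ 0) :
    0 < τ * (r ^ 2 * τ - A * w) := by
  have hτ_sq : 0 < |τ| ^ 2 := by positivity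
  have hA : 0 ≤ |A| := abs_nonneg A
  have cross : τ * (A * w) ≤ |A| * (r * |τ| ^ 2) :=
    calc τ * (A * w) ≤ |τ * (A * w)| := le_abs_self _
      _ = |A| * (|τ| * |w|) := by rw [abs_mul, abs_mul]; ring
      _ ≤ |A| * (|τ| * (r * |τ|)) := by gcongr
      _ = |A| * (r * |τ| ^ 2) := by ring
  have gap : 0 < r * |τ| ^ 2 * (r - |A|) := mul_pos (mul_pos (hA.trans_lt hr) hτ_sq) (by linarith)
  calc 0 < r * |τ| ^ 2 * (r - |A|) := gap
    _ = r ^ 2 * τ ^ 2 - |A| * (r * |τ| ^ 2) := by rw [sq_abs]; ring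
    _ ≤ r ^ 2 * τ ^ 2 - τ * (A * w) := by linarith
    _ = τ * (r ^ 2 * τ - A * w) := by ring

/-- On the characteristic set with `r > |A|`, the coefficient `r²τ - A(Aτ+η)` of `∂_t`
in the rescaled b-Hamilton vector field has the same sign as `τ`. -/
theorem t_monotone_outside_string (A r τ ξ η : ℝ)
    (hSigma : r^2 * τ^2 = ξ^2 + (A * τ + η)^2) (hr : |A| < r) :
    (0 < τ → 0 < r^2 * τ - A * (A * τ + η)) ∧
    (τ < 0 → r^2 * τ - A * (A * τ + η) < 0) := by
  have hw : |A * τ + η| ≤ r * |τ| := by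
    simpa only [abs_of_pos ((abs_nonneg A).trans_lt hr)] using
      abs_le_abs_mul_of_sq_eq_add_sq hSigma
  have key (hτ : τ ≠ 0) := mul_sub_mul_pos_of_abs_le hw hr hτ
  exact ⟨fun hτ => pos_of_mul_pos_right (key hτ.ne') hτ.le,
    fun hτ => neg_of_mul_pos_right (key hτ.ne) hτ.le⟩
end

section
/- Let γ(s) = (x₀ + s·v, t₀ + s) be a null geodesic in 2+1 Minkowski space with |v| = 1, written in the coordinates (x, t') with t' = t - Aφ and φ the polar angle of x ∈ ℝ² \ {0}. If the geodesic is parametrized so that t(s) → +∞ as s → +∞, then for all s, t(s) - t(0) ≥ -|A|π. (The total variation of the polar angle φ along a line in the plane not through the origin is at most π.) -/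
/-- Along a null geodesic oriented so that `t(s) → +∞` as `s → +∞`, with
`t = t' + Aφ`, `t'(s) = t'(0) + s`, and the total variation of the polar angle `φ`
along the line bounded by `π`, one has `t(s) - t(0) ≥ -|A|π` for all `s ≥ 0`. -/
theorem time_delay_bound (A : ℝ) (t t' φ : ℝ → ℝ)
    (ht : ∀ s, t s = t' s + A * φ s)
    (ht' : ∀ s, t' s = t' 0 + s)
    (hφ : ∀ s u, |φ s - φ u| ≤ Real.pi) :
    ∀ s, 0 ≤ s → -( |A| * Real.pi) ≤ t s - t 0 := by
  intro s hs
  have hdelay : t s - t 0 = s + A * (φ s - φ 0) := by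
    rw [ht s, ht 0, ht' s]
    ring
  have hwinding : |A * (φ s - φ 0)| ≤ |A| * Real.pi := by
    rw [abs_mul]
    exact mul_le_mul_of_nonneg_left (hφ s 0) (abs_nonneg A)
  linarith [neg_abs_le (A * (φ s - φ 0))]
end
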